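/- arXiv:1001.1374 — 2 statements merged into one kernel-verified Lean document; each statement's English description precedes it below -/
import Mathlib

section
/- (ABZ bound) Let G = K + C = A + B + Z with Z >= 0, and let D be a sum of distinct rational points with support disjoint from Z. Then the minimum distance of the residue code C_Ω(D, G) satisfies d >= (l(A) - l(A-C)) + (l(B) - l(B-C)). -/
noncomputable section

/-- Degree of a divisor, where divisors on the curve are modeled as finitely
supported integer valued functions on the set of rational points. -/
def degr {Point : Type*} (D : Point →₀ ℤ) : ℤ := D.sum fun _ n => n

/-- An abstract model of a smooth projective absolutely irreducible curve over a field,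
recording the data used in the paper: the dimension `l D` of the Riemann-Roch space
`L(D)`, the genus `g`, a canonical divisor `K`, and linear equivalence `lin`,
together with their basic properties (Riemann-Roch, monotonicity, semigroup
properties of nongaps, etc.). -/
structure Curve (Point : Type*) where
  /-- `l D = dim L(D)` -/
  l : (Point →₀ ℤ) → ℕ
  /-- the genus -/
  g : ℕ
  /-- a canonical divisor -/
  K : Point →₀ ℤ
  /-- linear equivalence of divisors -/
  lin : (Point →₀ ℤ) → (Point →₀ ℤ) → Prop
  lin_refl : ∀ A, lin A A
  lin_symm : ∀ {A B}, lin A B → lin B A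
  lin_trans : ∀ {A B C}, lin A B → lin B C → lin A C
  lin_add : ∀ {A B} (E : Point →₀ ℤ), lin A B → lin (A + E) (B + E)
  deg_lin : ∀ {A B}, lin A B → degr A = degr B
  l_lin : ∀ {A B}, lin A B → l A = l B
  l_zero : l 0 = 1
  l_neg : ∀ {D}, degr D < 0 → l D = 0
  l_mono : ∀ (D : Point →₀ ℤ) (P : Point), l D ≤ l (D + Finsupp.single P 1)
  l_step : ∀ (D : Point →₀ ℤ) (P : Point), l (D + Finsupp.single P 1) ≤ l D + 1
  /-- Riemann-Roch -/
  rr : ∀ D : Point →₀ ℤ, (l D : ℤ) - l (K - D) = degr D + 1 - g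
  lin_of_deg_zero : ∀ {D}, l D ≠ 0 → degr D = 0 → lin D 0
  /-- the semigroup property of `Γ_P` -/
  gamma_add : ∀ (P : Point) {A B}, l A ≠ l (A - Finsupp.single P 1) →
      l B ≠ l (B - Finsupp.single P 1) → l (A + B) ≠ l (A + B - Finsupp.single P 1)
  eff_add : ∀ {A B}, l A ≠ 0 → l B ≠ 0 → l (A + B) ≠ 0
  point_nongap : ∀ {P Q : Point}, P ≠ Q →
      l (Finsupp.single P 1) ≠ l (Finsupp.single P 1 - Finsupp.single Q 1)

variable {Point : Type*}

/-- `Γ_P` : divisor (classes) with no base point at `P`, i.e. `L(A) ≠ L(A-P)`. -/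
def GammaP (X : Curve Point) (P : Point) : Set (Point →₀ ℤ) :=
  {A | X.l A ≠ X.l (A - Finsupp.single P 1)}

/-- `Γ_S = ∩_{P ∈ S} Γ_P`, with the convention `Γ_∅ = Γ = {A : L(A) ≠ 0}`. -/
def GammaS (X : Curve Point) (S : Finset Point) : Set (Point →₀ ℤ) :=
  {A | (S = ∅ → X.l A ≠ 0) ∧ ∀ P ∈ S, A ∈ GammaP X P}

/-- `Γ(C; S, S') = {A : A ∈ Γ_S and A - C ∈ Γ_{S'}}`. -/
def GammaSet (X : Curve Point) (C : Point →₀ ℤ) (S S' : Finset Point) :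
    Set (Point →₀ ℤ) :=
  {A | A ∈ GammaS X S ∧ A - C ∈ GammaS X S'}

/-- `γ(C; S, S') = min {deg A : A ∈ Γ(C; S, S')}`. -/
def gammaMin (X : Curve Point) (C : Point →₀ ℤ) (S S' : Finset Point) : ℤ :=
  sInf (degr '' GammaSet X C S S')

/-- `Δ = {i : A_i ∈ Γ_{P_i} and A_i - C ∉ Γ_{P_i}}` for indices `1 ≤ i ≤ n`. -/
def Delta (X : Curve Point) (C : Point →₀ ℤ) (n : ℕ) (A : ℕ → Point →₀ ℤ)
    (P : ℕ → Point) : Set ℕ :=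
  {i | 1 ≤ i ∧ i ≤ n ∧ A i ∈ GammaP X (P i) ∧ A i - C ∉ GammaP X (P i)}

/-- `Δ' = {i : A_i ∉ Γ_{P_i} and A_i - C ∈ Γ_{P_i}}` for indices `1 ≤ i ≤ n`. -/
def Delta' (X : Curve Point) (C : Point →₀ ℤ) (n : ℕ) (A : ℕ → Point →₀ ℤ)
    (P : ℕ → Point) : Set ℕ :=
  {i | 1 ≤ i ∧ i ≤ n ∧ A i ∉ GammaP X (P i) ∧ A i - C ∈ GammaP X (P i)}

lemma degr_add (A B : Point →₀ ℤ) : degr (A + B) = degr A + degr B :=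
  Finsupp.sum_add_index' (fun _ => rfl) (fun _ _ _ => rfl)

lemma degr_single (P : Point) (n : ℤ) : degr (Finsupp.single P n) = n :=
  Finsupp.sum_single_index rfl

lemma degr_zero : degr (0 : Point →₀ ℤ) = 0 := by simp [degr]

lemma degr_neg (D : Point →₀ ℤ) : degr (-D) = -degr D := by
  have h := degr_add D (-D)
  rw [add_neg_cancel, degr_zero] at h
  linarith

lemma degr_sub (A B : Point →₀ ℤ) : degr (A - B) = degr A - degr B := by
  rw [sub_eq_add_neg, degr_add, degr_neg]; ring

lemma le_apply {Z : Point →₀ ℤ} (h : 0 ≤ Z) (a : Point) : 0 ≤ Z a :=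
  (Finsupp.le_def.mp h) a

lemma degr_nonneg {Z : Point →₀ ℤ} (h : 0 ≤ Z) : 0 ≤ degr Z :=
  Finset.sum_nonneg fun a _ => le_apply h a

lemma eff_induction {motive : (Point →₀ ℤ) → Prop}
    (h0 : motive 0)
    (hstep : ∀ (Z : Point →₀ ℤ) (P : Point), 0 ≤ Z → motive Z →
      motive (Z + Finsupp.single P 1)) :
    ∀ Z : Point →₀ ℤ, 0 ≤ Z → motive Z := by
  have key : ∀ n : ℕ, ∀ Z : Point →₀ ℤ, 0 ≤ Z → degr Z = n → motive Z := by
    intro n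
    induction n with
    | zero =>
      intro Z hZ hd
      have : Z = 0 := by
        ext a
        by_contra ha
        have hmem : a ∈ Z.support := Finsupp.mem_support_iff.mpr ha
        have h1 : 0 < Z a := lt_of_le_of_ne (le_apply hZ a) (Ne.symm ha)
        have h2 : Z a ≤ degr Z := Finset.single_le_sum (fun b _ => le_apply hZ b) hmem
        omega
      rw [this]; exact h0
    | succ n ih =>
      intro Z hZ hd
      have hne : Z ≠ 0 := by
        intro h; rw [h] at hd; simp [degr] at hd; omega
      obtain ⟨a, ha⟩ := Finsupp.ne_iff.mp hne
      simp only [Finsupp.coe_zero, Pi.zero_apply] at ha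
      have h1 : 1 ≤ Z a := lt_of_le_of_ne (le_apply hZ a) (Ne.symm ha)
      set Z' := Z - Finsupp.single a 1 with hZ'
      have hZ'nn : 0 ≤ Z' := by
        rw [Finsupp.le_def]
        intro b
        simp only [hZ', Finsupp.coe_zero, Pi.zero_apply, Finsupp.sub_apply]
        by_cases hb : b = a
        · subst hb; simp; omega
        · classical
          rw [Finsupp.single_apply, if_neg (fun h => hb h.symm)]
          simpa using le_apply hZ b
      have hdeg : degr Z' = n := by
        have : degr (Z' + Finsupp.single a 1) = degr Z' + 1 := by
          rw [degr_add, degr_single]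
        rw [hZ'] at this ⊢
        rw [sub_add_cancel] at this
        omega
      have := hstep Z' a hZ'nn (ih Z' hZ'nn hdeg)
      rwa [hZ', sub_add_cancel] at this
  intro Z hZ
  exact key (degr Z).toNat Z hZ (Int.toNat_of_nonneg (degr_nonneg hZ)).symm

lemma l_add_eff (X : Curve Point) (A : Point →₀ ℤ) {E : Point →₀ ℤ} (hE : 0 ≤ E) :
    X.l A ≤ X.l (A + E) := by
  refine eff_induction (motive := fun Z => X.l A ≤ X.l (A + Z)) ?_ ?_ E hE
  · simp
  · intro Z P _ ih
    have h := X.l_mono (A + Z) P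
    rw [← add_assoc] at *
    omega

lemma l_add_eff_le (X : Curve Point) (A : Point →₀ ℤ) {E : Point →₀ ℤ} (hE : 0 ≤ E) :
    (X.l (A + E) : ℤ) ≤ X.l A + degr E := by
  refine eff_induction (motive := fun Z => (X.l (A + Z) : ℤ) ≤ X.l A + degr Z) ?_ ?_ E hE
  · simp [degr_zero]
  · intro Z P _ ih
    have h := X.l_step (A + Z) P
    rw [← add_assoc]
    rw [degr_add, degr_single]
    push_cast at *
    linarith

lemma support_add_nonneg {Z W : Point →₀ ℤ} (hZ : 0 ≤ Z) (hW : 0 ≤ W) {a : Point}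
    (ha : a ∉ (Z + W).support) : a ∉ Z.support ∧ a ∉ W.support := by
  have h := Finsupp.notMem_support_iff.mp ha
  rw [Finsupp.add_apply] at h
  have h1 := le_apply hZ a
  have h2 := le_apply hW a
  constructor <;> rw [Finsupp.notMem_support_iff] <;> omega

lemma single_nonneg' (P : Point) : (0 : Point →₀ ℤ) ≤ Finsupp.single P 1 := by
  rw [Finsupp.le_def]
  intro a
  classical
  simp only [Finsupp.coe_zero, Pi.zero_apply, Finsupp.single_apply]
  split <;> omega

lemma gammaP_eff (X : Curve Point) {Z : Point →₀ ℤ} (hZ : 0 ≤ Z) {P : Point}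
    (hP : P ∉ Z.support) : X.l Z ≠ X.l (Z - Finsupp.single P 1) := by
  refine eff_induction
    (motive := fun Z => P ∉ Z.support → X.l Z ≠ X.l (Z - Finsupp.single P 1)) ?_ ?_ Z hZ hP
  · intro _
    rw [X.l_zero, zero_sub, X.l_neg (by rw [degr_neg, degr_single]; norm_num)]
    omega
  · intro W Q hW ih hmem
    obtain ⟨hPW, hPQ⟩ := support_add_nonneg hW (single_nonneg' Q) hmem
    have hQP : Q ≠ P := by
      intro h; subst h
      exact hPQ (by simp)
    exact X.gamma_add P (ih hPW) (X.point_nongap hQP)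

lemma drop_le (X : Curve Point) (A : Point →₀ ℤ) {Z : Point →₀ ℤ} (hZ : 0 ≤ Z)
    {D₀ : Point →₀ ℤ} (hD₀ : 0 ≤ D₀) (hsupp : ∀ Q ∈ D₀.support, Q ∉ Z.support) :
    (X.l A : ℤ) - X.l (A - D₀) ≤ (X.l (A + Z) : ℤ) - X.l (A + Z - D₀) := by
  refine eff_induction
    (motive := fun D₀ => (∀ Q ∈ D₀.support, Q ∉ Z.support) →
      (X.l A : ℤ) - X.l (A - D₀) ≤ (X.l (A + Z) : ℤ) - X.l (A + Z - D₀)) ?_ ?_ D₀ hD₀ hsupp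
  · intro _; simp
  · intro W P hW ih hmem
    have hsub : ∀ Q ∈ W.support, Q ∉ Z.support := by
      intro Q hQ
      apply hmem
      have h1 := le_apply hW Q
      have h2 := le_apply (single_nonneg' P) Q
      have h3 := Finsupp.mem_support_iff.mp hQ
      rw [Finsupp.mem_support_iff, Finsupp.add_apply]
      omega
    have hPZ : P ∉ Z.support := by
      apply hmem
      have h1 := le_apply hW P
      rw [Finsupp.mem_support_iff, Finsupp.add_apply, Finsupp.single_eq_same]
      omega
    have ihW := ih hsub
    -- local drop comparison at P
    have e1 : A - W - Finsupp.single P 1 + Finsupp.single P 1 = A - W := by abel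
    have e2 : A + Z - W - Finsupp.single P 1 + Finsupp.single P 1 = A + Z - W := by abel
    have hx1 : X.l (A - W - Finsupp.single P 1) ≤ X.l (A - W) := by
      have := X.l_mono (A - W - Finsupp.single P 1) P; rwa [e1] at this
    have hx2 : X.l (A - W) ≤ X.l (A - W - Finsupp.single P 1) + 1 := by
      have := X.l_step (A - W - Finsupp.single P 1) P; rwa [e1] at this
    have hy1 : X.l (A + Z - W - Finsupp.single P 1) ≤ X.l (A + Z - W) := by
      have := X.l_mono (A + Z - W - Finsupp.single P 1) P; rwa [e2] at this
    have hy2 : X.l (A + Z - W) ≤ X.l (A + Z - W - Finsupp.single P 1) + 1 := by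
      have := X.l_step (A + Z - W - Finsupp.single P 1) P; rwa [e2] at this
    have hlocal : (X.l (A - W) : ℤ) - X.l (A - W - Finsupp.single P 1) ≤
        (X.l (A + Z - W) : ℤ) - X.l (A + Z - W - Finsupp.single P 1) := by
      by_cases hdrop : X.l (A - W) = X.l (A - W - Finsupp.single P 1)
      · push_cast; omega
      · have hZG := gammaP_eff X hZ hPZ
        have := X.gamma_add P hdrop hZG
        have e3 : A - W + Z = A + Z - W := by abel
        have e4 : A - W + Z - Finsupp.single P 1 = A + Z - W - Finsupp.single P 1 := by abel
        rw [e3] at this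
        push_cast; omega
    have e5 : A - (W + Finsupp.single P 1) = A - W - Finsupp.single P 1 := by abel
    have e6 : A + Z - (W + Finsupp.single P 1) = A + Z - W - Finsupp.single P 1 := by abel
    rw [e5, e6]
    push_cast at *
    linarith

/-- (ABZ bound) Let `G = K + C = A + B + Z` with `Z ≥ 0` and let `D` be a set of distinct
rational points disjoint from the support of `Z`.  The residue code `C_Ω(D,G)` is modeled
abstractly by the defining property that a nonzero codeword `c` has a support divisor `D'`
(a sum of distinct points of `D`, of degree `wt(c)`) for which there is a nonzero
differential in `Ω(G - D')`, i.e. `E ≥ 0` disjoint from `D'` with `K ~ G - D' + E`.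
Then every nonzero codeword `c` satisfies
`wt(c) ≥ (l(A) - l(A-C)) + (l(B) - l(B-C))`, i.e. this is a lower bound for the minimum
distance of `C_Ω(D,G)`. -/
theorem abz_bound (X : Curve Point) {F : Type*} [Field F] [DecidableEq F] {n : ℕ}
    (Code : Submodule F (Fin n → F)) (D : Finset Point)
    (G C A B Z : Point →₀ ℤ)
    (hG : G = X.K + C) (hdec : G = A + B + Z) (hZ : 0 ≤ Z)
    (hDZ : ∀ P ∈ D, P ∉ Z.support)
    (hcode : ∀ c ∈ Code, c ≠ 0 → ∃ D' E : Point →₀ ℤ,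
      0 ≤ D' ∧ (∀ Q, D' Q ≤ 1) ∧ D'.support ⊆ D ∧
      0 ≤ E ∧ Disjoint E.support D'.support ∧
      X.lin X.K (G - D' + E) ∧ degr D' = (hammingNorm c : ℤ)) :
    ∀ c ∈ Code, c ≠ 0 →
      ((X.l A : ℤ) - X.l (A - C)) + ((X.l B : ℤ) - X.l (B - C)) ≤ (hammingNorm c : ℤ) := by
  intro c hc hc0
  obtain ⟨D', E, hD'0, _, hD'D, hE0, _, hlin, hdeg⟩ := hcode c hc hc0
  have h1 : X.K + C = A + B + Z := by rw [← hG, hdec]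
  have hK : X.K = A + B + Z - C := eq_sub_of_add_eq h1
  -- linear equivalence 0 ~ C - D' + E
  have lin0 : X.lin 0 (C - D' + E) := by
    have h2 := X.lin_add (-X.K) hlin
    have e1 : X.K + -X.K = (0 : Point →₀ ℤ) := by abel
    have e2 : G - D' + E + -X.K = C - D' + E := by rw [hG]; abel
    rwa [e1, e2] at h2
  -- transported l-values
  have lAC : X.l (A - C) = X.l (A - D' + E) := by
    have h3 := X.lin_add (A - C) lin0
    have e1 : (0 : Point →₀ ℤ) + (A - C) = A - C := by abel
    have e2 : C - D' + E + (A - C) = A - D' + E := by abel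
    rw [e1, e2] at h3
    exact X.l_lin h3
  have lAZC : X.l (A + Z - C) = X.l (A + Z - D' + E) := by
    have h3 := X.lin_add (A + Z - C) lin0
    have e1 : (0 : Point →₀ ℤ) + (A + Z - C) = A + Z - C := by abel
    have e2 : C - D' + E + (A + Z - C) = A + Z - D' + E := by abel
    rw [e1, e2] at h3
    exact X.l_lin h3
  -- degrees
  have degC : degr C = degr D' - degr E := by
    have h4 := X.deg_lin lin0
    rw [degr_zero, degr_add, degr_sub] at h4
    linarith
  -- Riemann-Roch for B and B - C
  have r1 := X.rr B
  have r2 := X.rr (B - C)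
  have eKB : X.K - B = A + Z - C := by rw [hK]; abel
  have eKBC : X.K - (B - C) = A + Z := by rw [hK]; abel
  rw [eKB] at r1
  rw [eKBC, degr_sub] at r2
  -- the three inequalities
  have i1 : X.l (A - D') ≤ X.l (A - D' + E) := l_add_eff X (A - D') hE0
  have i2 : (X.l (A + Z - D' + E) : ℤ) ≤ X.l (A + Z - D') + degr E :=
    l_add_eff_le X (A + Z - D') hE0
  have i3 : (X.l A : ℤ) - X.l (A - D') ≤ (X.l (A + Z) : ℤ) - X.l (A + Z - D') :=
    drop_le X A hZ hD'0 (fun Q hQ => hDZ Q (hD'D hQ))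
  rw [lAC]
  rw [lAZC] at r1
  push_cast at *
  linarith [hdeg]
end
end

section
/- (Greedy optimality) In the sequence formulation, the lower bound min_j γ*(C + R_j; S, Q_j) is maximized by the greedy choice: at each step choose Q_j ∈ S' with γ*(C + R_j; S, Q_j) = max_{Q ∈ S'} γ*(C + R_j; S, Q). The resulting bound equals both the optimal sequence bound and the semigroup bound min_{λ ∈ Λ'} max_{Q ∈ S'} γ*(C+λ; S, Q). -/
noncomputable section

/-- `R_j = Q_0 + Q_1 + ... + Q_{j-1}`, the partial sums of a sequence of points,
viewed as divisors. -/
def Rdiv {Point : Type*} (Q : ℕ → Point) (j : ℕ) : Point →₀ ℤ :=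
  ∑ k ∈ Finset.range j, Finsupp.single (Q k) 1

/-! The semigroup bound `μ = min_{λ ∈ Λ'} max_{Q ∈ S'} γ*(C + λ; S, Q)` is attained at some `λ₀`.
Each greedy term equals `max_Q γ*(C + R_j; S, Q) ≥ μ`, since `R_j ∈ Λ'`. Conversely, along any
sequence take the first `j` with `R_{j+1} ≰ λ₀`; it satisfies `j ≤ deg λ₀`, and `λ₀ - R_j ≥ 0`
vanishes at `Q_j`, so monotonicity gives `γ*(C + R_j; S, Q_j) ≤ γ*(C + λ₀; S, Q_j) ≤ μ`. Hence for
`r ≥ deg λ₀` the greedy sequence bound is `μ` and no sequence does better. -/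

theorem Nat.exists_le_of_not_succ {p : ℕ → Prop} (h0 : p 0) :
    ∀ {n : ℕ}, ¬ p (n + 1) → ∃ j ≤ n, p j ∧ ¬ p (j + 1)
  | 0, h => ⟨0, le_rfl, h0, h⟩
  | n + 1, h => by
    by_cases hn : p (n + 1)
    · exact ⟨n + 1, le_rfl, hn, h⟩
    · obtain ⟨j, hj, hpj, hnj⟩ := Nat.exists_le_of_not_succ h0 hn
      exact ⟨j, hj.trans n.le_succ, hpj, hnj⟩

namespace Finsupp

variable {α β : Type*}

theorem degree_nonneg {a : α →₀ ℤ} (ha : 0 ≤ a) : 0 ≤ degree a :=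
  Finset.sum_nonneg fun p _ => ha p

theorem degree_le_degree {a b : α →₀ ℤ} (h : a ≤ b) : degree a ≤ degree b := by
  have := degree_nonneg (sub_nonneg.mpr h)
  rwa [map_sub, sub_nonneg] at this

theorem apply_eq_of_not_add_single_le {a b : α →₀ ℤ} {q : α} (h : a ≤ b)
    (hq : ¬ a + single q 1 ≤ b) : a q = b q := by
  classical
  by_contra hne
  refine hq fun p => ?_
  by_cases hp : p = q
  · subst hp
    have := h p
    simp only [coe_add, Pi.add_apply, single_eq_same]
    omega
  · simpa [single_eq_of_ne hp] using h p

section Monotone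

variable [Preorder β] {f : (α →₀ ℤ) → β} {Q : α}

theorem le_apply_add_single (hf : ∀ D P, P ≠ Q → f D ≤ f (D + single P 1))
    {D : α →₀ ℤ} {P : α} (hP : P ≠ Q) {c : ℤ} (hc : 0 ≤ c) : f D ≤ f (D + single P c) := by
  induction c, hc using Int.leInduction with
  | base => simp
  | succ c _ ih => exact ih.trans (by rw [single_add, ← add_assoc]; exact hf _ P hP)

theorem le_apply_add_sum_single (hf : ∀ D P, P ≠ Q → f D ≤ f (D + single P 1))
    (D : α →₀ ℤ) {s : Finset α} (hs : Q ∉ s) {c : α → ℤ} (hc : ∀ p ∈ s, 0 ≤ c p) :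
    f D ≤ f (D + ∑ p ∈ s, single p (c p)) := by
  classical
  induction s using Finset.induction_on with
  | empty => simp
  | insert a s ha ih =>
    rw [Finset.sum_insert ha, add_comm (single a _), ← add_assoc]
    have hQa : a ≠ Q := fun h => hs (h ▸ Finset.mem_insert_self a s)
    exact (ih (fun h => hs (Finset.mem_insert_of_mem h)) fun p hp =>
      hc p (Finset.mem_insert_of_mem hp)).trans <|
      le_apply_add_single hf hQa (hc a (Finset.mem_insert_self a s))

theorem le_apply_add_of_nonneg (hf : ∀ D P, P ≠ Q → f D ≤ f (D + single P 1))
    (D : α →₀ ℤ) {ν : α →₀ ℤ} (hν : 0 ≤ ν) (hνQ : ν Q = 0) : f D ≤ f (D + ν) := by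
  have h := le_apply_add_sum_single hf D (notMem_support_iff.mpr hνQ) fun p _ => hν p
  rwa [← Finsupp.sum, sum_single] at h

end Monotone

end Finsupp

section PartialSums

variable {Point : Type*} (Q : ℕ → Point)

theorem Rdiv_succ (j : ℕ) : Rdiv Q (j + 1) = Rdiv Q j + Finsupp.single (Q j) 1 :=
  Finset.sum_range_succ _ _

theorem Rdiv_nonneg (j : ℕ) : 0 ≤ Rdiv Q j :=
  Finset.sum_nonneg fun _ _ => Finsupp.single_nonneg.mpr zero_le_one

theorem support_Rdiv_subset {S : Finset Point} (hQ : ∀ j, Q j ∈ S) (j : ℕ) :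
    (Rdiv Q j).support ⊆ S := by
  classical
  refine Finsupp.support_finsetSum.trans (Finset.biUnion_subset.mpr fun k _ => ?_)
  exact Finsupp.support_single_subset.trans (Finset.singleton_subset_iff.mpr (hQ k))

theorem degree_Rdiv (j : ℕ) : (Rdiv Q j).degree = j := by
  simp [Rdiv]

theorem exists_Rdiv_le_of_nonneg {lam : Point →₀ ℤ} (hlam : 0 ≤ lam) :
    ∃ j ≤ lam.degree.toNat, Rdiv Q j ≤ lam ∧ Rdiv Q j (Q j) = lam (Q j) := by
  have hout : ¬ Rdiv Q (lam.degree.toNat + 1) ≤ lam := fun h => by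
    have := Finsupp.degree_le_degree h
    rw [degree_Rdiv] at this
    omega
  obtain ⟨j, hj, hle, hnle⟩ := Nat.exists_le_of_not_succ (p := (Rdiv Q · ≤ lam)) hlam hout
  exact ⟨j, hj, hle, Finsupp.apply_eq_of_not_add_single_le hle (Rdiv_succ Q j ▸ hnle)⟩

end PartialSums

section Bounds

variable {Point : Type*}

def seqBound (gstar : (Point →₀ ℤ) → Point → ℤ) (C : Point →₀ ℤ) (Q : ℕ → Point) (r : ℕ) : ℤ :=
  (Finset.range (r + 1)).inf' Finset.nonempty_range_add_one fun j => gstar (C + Rdiv Q j) (Q j)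

theorem seqBound_le_sup' {S' : Finset Point} (hS' : S'.Nonempty) (C : Point →₀ ℤ)
    {gstar : (Point →₀ ℤ) → Point → ℤ}
    (hmono : ∀ (D : Point →₀ ℤ) (P Q : Point), P ≠ Q →
      gstar D Q ≤ gstar (D + Finsupp.single P 1) Q)
    {Q : ℕ → Point} (hQ : ∀ j, Q j ∈ S') {lam : Point →₀ ℤ} (hlam : 0 ≤ lam) {r : ℕ}
    (hr : lam.degree.toNat ≤ r) :
    seqBound gstar C Q r ≤ S'.sup' hS' fun Q' => gstar (C + lam) Q' := by
  obtain ⟨j, hj, hle, heq⟩ := exists_Rdiv_le_of_nonneg Q hlam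
  calc seqBound gstar C Q r ≤ gstar (C + Rdiv Q j) (Q j) :=
        Finset.inf'_le _ (Finset.mem_range_succ_iff.mpr (hj.trans hr))
    _ ≤ gstar (C + Rdiv Q j + (lam - Rdiv Q j)) (Q j) :=
        Finsupp.le_apply_add_of_nonneg (fun D P hP => hmono D P (Q j) hP) _
          (sub_nonneg.mpr hle) (by simp [heq])
    _ = gstar (C + lam) (Q j) := by rw [add_add_sub_cancel]
    _ ≤ S'.sup' hS' fun Q' => gstar (C + lam) Q' := Finset.le_sup' _ (hQ j)

end Bounds

/-- (Greedy optimality) In the sequence formulation of the order bound, with monotone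
lower bounds `γ*` (`γ*(C+λ+P; S, Q) ≥ γ*(C+λ; S, Q)` for `P ≠ Q`), the bound
`min_j γ*(C + R_j; S, Q_j)` is maximized by the greedy choice: at each step choose
`Q_j ∈ S'` with `γ*(C + R_j; S, Q_j) = max_{Q ∈ S'} γ*(C + R_j; S, Q)`.  The resulting
bound equals both the optimal sequence bound and the semigroup bound
`min_{λ ∈ Λ'} max_{Q ∈ S'} γ*(C+λ; S, Q)`. -/
theorem greedy_optimal {Point : Type*} (S' : Finset Point) (hS' : S'.Nonempty)
    (C : Point →₀ ℤ)
    (gstar : (Point →₀ ℤ) → Point → ℤ)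
    (hmono : ∀ (D : Point →₀ ℤ) (P Q : Point), P ≠ Q →
      gstar D Q ≤ gstar (D + Finsupp.single P 1) Q)
    (hbdd : BddBelow {m : ℤ | ∃ lam : Point →₀ ℤ, 0 ≤ lam ∧ lam.support ⊆ S' ∧
      m = S'.sup' hS' fun Q => gstar (C + lam) Q})
    (Q : ℕ → Point) (hQ : ∀ j, Q j ∈ S')
    (hgreedy : ∀ j, gstar (C + Rdiv Q j) (Q j)
      = S'.sup' hS' fun Q' => gstar (C + Rdiv Q j) Q') :
    ∃ r0 : ℕ, ∀ r ≥ r0,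
      ((Finset.range (r + 1)).inf' Finset.nonempty_range_add_one
          fun j => gstar (C + Rdiv Q j) (Q j))
        = sSup {m : ℤ | ∃ Q'' : ℕ → Point, (∀ j, Q'' j ∈ S') ∧
            m = (Finset.range (r + 1)).inf' Finset.nonempty_range_add_one
                  fun j => gstar (C + Rdiv Q'' j) (Q'' j)} ∧
      ((Finset.range (r + 1)).inf' Finset.nonempty_range_add_one
          fun j => gstar (C + Rdiv Q j) (Q j))
        = sInf {m : ℤ | ∃ lam : Point →₀ ℤ, 0 ≤ lam ∧ lam.support ⊆ S' ∧
            m = S'.sup' hS' fun Q' => gstar (C + lam) Q'} := by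
  obtain ⟨lam₀, hlam₀, -, hmin⟩ := Int.csInf_mem (by exact ⟨_, 0, le_rfl, by simp, rfl⟩) hbdd
  refine ⟨lam₀.degree.toNat, fun r hr => ?_⟩
  have hupper (Q'' : ℕ → Point) (hQ'' : ∀ j, Q'' j ∈ S') :
      seqBound gstar C Q'' r ≤ S'.sup' hS' fun Q' => gstar (C + lam₀) Q' :=
    seqBound_le_sup' hS' C hmono hQ'' hlam₀ hr
  have hlower : (S'.sup' hS' fun Q' => gstar (C + lam₀) Q') ≤ seqBound gstar C Q r :=
    Finset.le_inf' _ _ fun j _ => hmin ▸ hgreedy j ▸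
      csInf_le hbdd ⟨Rdiv Q j, Rdiv_nonneg Q j, support_Rdiv_subset Q hQ j, rfl⟩
  refine ⟨Eq.symm (IsGreatest.csSup_eq ⟨⟨Q, hQ, rfl⟩, ?_⟩),
    hmin ▸ le_antisymm (hupper Q hQ) hlower⟩
  rintro _ ⟨Q'', hQ'', rfl⟩
  exact (hupper Q'' hQ'').trans hlower
end
end
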